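/- Every module is a component: if M is a connected nonempty multiplicative structure that is a sub-structure of some multiplicative net S (a structure with no inputs, at least one output, all of whose tests are connected and acyclic), then every test of M is acyclic and, in every test of M, every vertex of M is connected to some vertex of the border of M. -/
import Mathlib


/-- The data of a multiplicative structure over a vertex type `V`: a type of
links, each with a finite set of inputs, a finite set of outputs, and a
behavior, i.e. a set of partitions of its border (each partition given as a
finite set of blocks). -/
structure PreStruct (V : Type*) where
  Link : Type*
  inp : Link → Finset V
  out : Link → Finset V
  beh : Link → Set (Finset (Finset V))

namespace PreStruct

variable {V : Type*} [DecidableEq V]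

/-- `P` is a partition of the finite set `s`: nonempty blocks included in `s`,
every element of `s` lying in exactly one block. -/
def IsPartitionOf (P : Finset (Finset V)) (s : Finset V) : Prop :=
  (∀ b ∈ P, b.Nonempty ∧ b ⊆ s) ∧ ∀ v ∈ s, ∃! b, b ∈ P ∧ v ∈ b

variable (S : PreStruct V)

/-- The border of a link. -/
def linkBorder (ℓ : S.Link) : Finset V := S.inp ℓ ∪ S.out ℓ

/-- `S` is a multiplicative structure: it is a linear hypergraph (each vertex
occurs at most once as an input and at most once as an output of a link, and
never as both an input and an output of the same link), and each behavior is a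
nonempty set of partitions of the border of the link. -/
def IsMult : Prop :=
  (∀ v : V, ∀ ℓ₁ ℓ₂ : S.Link, v ∈ S.inp ℓ₁ → v ∈ S.inp ℓ₂ → ℓ₁ = ℓ₂) ∧
  (∀ v : V, ∀ ℓ₁ ℓ₂ : S.Link, v ∈ S.out ℓ₁ → v ∈ S.out ℓ₂ → ℓ₁ = ℓ₂) ∧
  (∀ ℓ : S.Link, Disjoint (S.inp ℓ) (S.out ℓ)) ∧
  (∀ ℓ : S.Link, ∀ P ∈ S.beh ℓ, IsPartitionOf P (S.linkBorder ℓ)) ∧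
  (∀ ℓ : S.Link, (S.beh ℓ).Nonempty)

/-- The vertices of `S`: those occurring in some link. -/
def verts : Set V := {v | ∃ ℓ, v ∈ S.linkBorder ℓ}

/-- The inputs of `S`: vertices of `S` which are not an output of any link. -/
def inputs : Set V := {v | (∃ ℓ, v ∈ S.inp ℓ) ∧ ∀ ℓ, v ∉ S.out ℓ}

/-- The outputs of `S`: vertices of `S` which are not an input of any link. -/
def outputs : Set V := {v | (∃ ℓ, v ∈ S.out ℓ) ∧ ∀ ℓ, v ∉ S.inp ℓ}

/-- The border of `S`: its inputs and outputs. -/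
def border : Set V := S.inputs ∪ S.outputs

/-- A switching assigns to each link a finite set of blocks. -/
def Switching := ∀ _ : S.Link, Finset (Finset V)

/-- A valid switching chooses for each link a partition in its behavior. -/
def IsSwitching (σ : S.Switching) : Prop := ∀ ℓ, σ ℓ ∈ S.beh ℓ

/-- Adjacency in the test determined by `σ`: two vertices lie in a common
block of the partition chosen for some link. -/
def testAdj (σ : S.Switching) (u w : V) : Prop :=
  ∃ ℓ, ∃ b ∈ σ ℓ, u ∈ b ∧ w ∈ b

/-- Connectivity in the test determined by `σ`. -/
def TestReach (σ : S.Switching) (u w : V) : Prop :=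
  Relation.ReflTransGen (S.testAdj σ) u w

/-- The test determined by `σ` contains a cycle: a closed alternating sequence
of pairwise distinct vertices and pairwise distinct hyperedges (a hyperedge is
a block `b` of the partition `σ ℓ` chosen for some link `ℓ`), each hyperedge
containing the two distinct vertices around it. -/
def TestHasCycle (σ : S.Switching) : Prop :=
  ∃ (n : ℕ) (v : Fin (n + 1) → V) (e : Fin n → S.Link × Finset V),
    1 ≤ n ∧ Function.Injective e ∧
    (∀ i : Fin n, (e i).2 ∈ σ (e i).1) ∧
    (∀ i : Fin n, v i.castSucc ∈ (e i).2 ∧ v i.succ ∈ (e i).2 ∧ v i.castSucc ≠ v i.succ) ∧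
    v 0 = v (Fin.last n) ∧
    Function.Injective (fun i : Fin n => v i.castSucc)

/-- A component: a multiplicative structure all of whose tests are acyclic and
in which, in every test, every vertex is connected to a border vertex. -/
def IsComponent : Prop :=
  S.IsMult ∧ ∀ σ : S.Switching, S.IsSwitching σ →
    ¬ S.TestHasCycle σ ∧ ∀ v ∈ S.verts, ∃ w ∈ S.border, S.TestReach σ v w

/-- A transitory component: every input is connected to an output in some
test. -/
def IsTransitory : Prop :=
  S.IsComponent ∧
  ∀ v ∈ S.inputs, ∃ σ : S.Switching, S.IsSwitching σ ∧ ∃ w ∈ S.outputs, S.TestReach σ v w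

/-- A multiplicative net: a correct multiplicative structure (all tests
connected and acyclic) with no inputs and at least one output. -/
def IsNet : Prop :=
  S.IsMult ∧ S.inputs = ∅ ∧ S.outputs.Nonempty ∧
  ∀ σ : S.Switching, S.IsSwitching σ →
    ¬ S.TestHasCycle σ ∧ ∀ u ∈ S.verts, ∀ w ∈ S.verts, S.TestReach σ u w

/-- Adjacency in the undirected hypergraph associated to `S`. -/
def structAdj (u w : V) : Prop := ∃ ℓ, u ∈ S.linkBorder ℓ ∧ w ∈ S.linkBorder ℓ

/-- `S` is connected and nonempty. -/
def IsConnectedNonempty : Prop :=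
  S.verts.Nonempty ∧ ∀ u ∈ S.verts, ∀ w ∈ S.verts, Relation.ReflTransGen S.structAdj u w

end PreStruct

/-- `M` is a sub-structure of `S`. -/
def IsSubStruct {V : Type*} (M S : PreStruct V) : Prop :=
  ∃ j : M.Link → S.Link, Function.Injective j ∧
    ∀ ℓ, S.inp (j ℓ) = M.inp ℓ ∧ S.out (j ℓ) = M.out ℓ ∧ S.beh (j ℓ) = M.beh ℓ

/-- Sequential composition (gluing): since both structures live over the same
vertex type, gluing along shared vertices is the disjoint union of the links. -/
def PreStruct.comp {V : Type*} (T M : PreStruct V) : PreStruct V where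
  Link := T.Link ⊕ M.Link
  inp := Sum.elim T.inp M.inp
  out := Sum.elim T.out M.out
  beh := Sum.elim T.beh M.beh

/-- every module is a component. If `M` is a connected nonempty
multiplicative structure which is a sub-structure of a multiplicative net `S`,
then every test of `M` is acyclic and, in every test of `M`, every vertex of
`M` is connected to some vertex of the border of `M`. -/
theorem stmt18 {V : Type*} [DecidableEq V] (M S : PreStruct V)
    (hM : M.IsMult) (hsub : IsSubStruct M S) (hS : S.IsNet)
    (hconn : M.IsConnectedNonempty) :
    ∀ σ : M.Switching, M.IsSwitching σ →
      ¬ M.TestHasCycle σ ∧ ∀ v ∈ M.verts, ∃ w ∈ M.border, M.TestReach σ v w := by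
  classical
  obtain ⟨j, hj, hjspec⟩ := hsub
  obtain ⟨hSmult, hSinp, hSoutne, hStest⟩ := hS
  intro σ hσ
  have hbeh : ∀ ℓ, (S.beh ℓ).Nonempty := hSmult.2.2.2.2
  set σ' : S.Switching := fun ℓs =>
    if h : ∃ ℓm, j ℓm = ℓs then σ h.choose else (hbeh ℓs).choose with hσ'def
  have hσ'j : ∀ ℓ, σ' (j ℓ) = σ ℓ := by
    intro ℓ
    have h : ∃ ℓm, j ℓm = j ℓ := ⟨ℓ, rfl⟩
    simp only [hσ'def, dif_pos h]
    exact congrArg σ (hj h.choose_spec)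
  have hσ'sw : S.IsSwitching σ' := by
    intro ℓs
    by_cases h : ∃ ℓm, j ℓm = ℓs
    · obtain ⟨ℓm, rfl⟩ := h
      rw [hσ'j, (hjspec ℓm).2.2]
      exact hσ ℓm
    · simp only [hσ'def, dif_neg h]
      exact (hbeh ℓs).choose_spec
  obtain ⟨hnocyc, hreach⟩ := hStest σ' hσ'sw
  -- link borders agree
  have hbord : ∀ ℓm, S.linkBorder (j ℓm) = M.linkBorder ℓm := by
    intro ℓm
    unfold PreStruct.linkBorder
    rw [(hjspec ℓm).1, (hjspec ℓm).2.1]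
  have hblksub : ∀ ℓs, ∀ b ∈ σ' ℓs, b ⊆ S.linkBorder ℓs := by
    intro ℓs b hb
    exact ((hSmult.2.2.2.1 ℓs (σ' ℓs) (hσ'sw ℓs)).1 b hb).2
  constructor
  · rintro ⟨n, v, e, hn, hinj, hmem, hvm, hcl, hvinj⟩
    apply hnocyc
    refine ⟨n, v, fun i => (j (e i).1, (e i).2), hn, ?_, ?_, hvm, hcl, hvinj⟩
    · intro i i' h
      simp only [Prod.mk.injEq] at h
      apply hinj
      exact Prod.ext (hj h.1) h.2
    · intro i
      simp only
      rw [hσ'j]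
      exact hmem i
  · intro v hv
    obtain ⟨ℓ₀, hv0⟩ := hv
    have hvS : v ∈ S.verts := ⟨j ℓ₀, by rw [hbord]; exact hv0⟩
    obtain ⟨w₀, hw₀⟩ := hSoutne
    have hw₀S : w₀ ∈ S.verts := by
      obtain ⟨ℓ, hℓ⟩ := hw₀.1
      exact ⟨ℓ, Finset.mem_union_right _ hℓ⟩
    have hpath : S.TestReach σ' v w₀ := hreach v hvS w₀ hw₀S
    -- non-border vertices of M are both inputs and outputs of M-links
    have hnonb : ∀ u, u ∈ M.verts → u ∉ M.border →
        (∃ ℓ₁, u ∈ M.inp ℓ₁) ∧ (∃ ℓ₂, u ∈ M.out ℓ₂) := by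
      intro u hu hub
      obtain ⟨ℓm, hℓm⟩ := hu
      simp only [PreStruct.border, PreStruct.inputs, PreStruct.outputs, Set.mem_union,
        Set.mem_setOf_eq, not_or, not_and, not_forall, not_not] at hub
      rcases Finset.mem_union.1 hℓm with h | h
      · obtain ⟨ℓ₂, hℓ₂⟩ := hub.1 ⟨ℓm, h⟩
        exact ⟨⟨ℓm, h⟩, ⟨ℓ₂, hℓ₂⟩⟩
      · obtain ⟨ℓ₁, hℓ₁⟩ := hub.2 ⟨ℓm, h⟩
        exact ⟨⟨ℓ₁, hℓ₁⟩, ⟨ℓm, h⟩⟩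
    have key : ∀ u, Relation.ReflTransGen (S.testAdj σ') v u →
        (∃ w ∈ M.border, M.TestReach σ v w) ∨ (M.TestReach σ v u ∧ u ∈ M.verts) := by
      intro u hu
      induction hu with
      | refl => exact Or.inr ⟨Relation.ReflTransGen.refl, ⟨ℓ₀, hv0⟩⟩
      | @tail b c _ hadj IH =>
        rcases IH with h | ⟨hr, hm⟩
        · exact Or.inl h
        · obtain ⟨ℓs, blk, hblk, hub, hwb⟩ := hadj
          by_cases hex : ∃ ℓm, j ℓm = ℓs
          · obtain ⟨ℓm, rfl⟩ := hex
            have hb' : blk ∈ σ ℓm := by rw [← hσ'j ℓm]; exact hblk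
            refine Or.inr ⟨hr.tail ⟨ℓm, blk, hb', hub, hwb⟩, ?_⟩
            exact ⟨ℓm, by rw [← hbord]; exact hblksub _ blk hblk hwb⟩
          · left
            refine ⟨b, ?_, hr⟩
            by_contra hbord'
            obtain ⟨⟨ℓ₁, hℓ₁⟩, ⟨ℓ₂, hℓ₂⟩⟩ := hnonb b hm hbord'
            have hbS : b ∈ S.linkBorder ℓs := hblksub ℓs blk hblk hub
            rcases Finset.mem_union.1 hbS with h | h
            · exact hex ⟨ℓ₁, (hSmult.1 b ℓs (j ℓ₁) h (by rw [(hjspec ℓ₁).1]; exact hℓ₁)).symm⟩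
            · exact hex ⟨ℓ₂, (hSmult.2.1 b ℓs (j ℓ₂) h (by rw [(hjspec ℓ₂).2.1]; exact hℓ₂)).symm⟩
    rcases key w₀ hpath with h | ⟨hr, hm⟩
    · exact h
    · refine ⟨w₀, ?_, hr⟩
      -- w₀ is an output of M
      obtain ⟨ℓm, hℓm⟩ := hm
      have hnotinp : ∀ ℓ', w₀ ∉ M.inp ℓ' := by
        intro ℓ' hc
        exact hw₀.2 (j ℓ') (by rw [(hjspec ℓ').1]; exact hc)
      rcases Finset.mem_union.1 hℓm with h | h
      · exact absurd h (hnotinp ℓm)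
      · exact Or.inr ⟨⟨ℓm, h⟩, hnotinp⟩
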